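/- arXiv:0911.3687 — 4 statements merged into one kernel-verified Lean document; each statement's English description precedes it below -/
import Mathlib

section
/- Let 0 < d < 1, λ± = (1±√d)², and let n_W(E) = ∫_{−∞}^E ρ_W(x) dx be the Marchenko–Pastur distribution function, where ρ_W(x) = (1/(2πd))·√(max(0,(λ₊−x)(x−λ₋)))/x. Then there is a constant C (depending on d) such that for all t ∈ (λ₋, λ₊) and all s ∈ [0,1], |t − n_W⁻¹(s)| ≤ C·|n_W(t) − s|^{2/3}, where n_W⁻¹ is the generalized inverse with n_W⁻¹(0) = λ₋ and n_W⁻¹(1) = λ₊. -/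
/-!
On every subinterval `[a, b]` of the support `[λ₋, λ₊]` there is a quarter-length piece on which
`(λ₊ - x)(x - λ₋) ≳ (λ₊ - λ₋)(b - a)`, so the density is `≳ √(b - a)` there and
`n_W(b) - n_W(a) ≥ c (b - a)^{3/2}`. Inverting this growth bound for the increasing function `n_W`
gives `|t - q| ≤ c^{-2/3} |n_W(t) - n_W(q)|^{2/3}`.
-/

open MeasureTheory Set

theorem abs_sub_le_of_rpow_le_sub {F : ℝ → ℝ} {S : Set ℝ} {c p : ℝ} (hc : 0 < c) (hp : 0 < p)
    (hF : ∀ a ∈ S, ∀ b ∈ S, a ≤ b → c * (b - a) ^ p ≤ F b - F a)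
    {t q : ℝ} (ht : t ∈ S) (hq : q ∈ S) :
    |t - q| ≤ c⁻¹ ^ p⁻¹ * |F t - F q| ^ p⁻¹ := by
  have hgrowth : c * |t - q| ^ p ≤ |F t - F q| := by
    rcases le_total q t with hqt | htq
    · rw [abs_of_nonneg (sub_nonneg.2 hqt)]
      exact (hF q hq t ht hqt).trans (le_abs_self _)
    · rw [abs_sub_comm, abs_of_nonneg (sub_nonneg.2 htq), abs_sub_comm]
      exact (hF t ht q hq htq).trans (le_abs_self _)
  calc |t - q| = c⁻¹ ^ p⁻¹ * (c * |t - q| ^ p) ^ p⁻¹ := by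
        rw [Real.mul_rpow hc.le (by positivity), ← Real.rpow_mul (abs_nonneg _),
          mul_inv_cancel₀ hp.ne', Real.rpow_one, ← mul_assoc,
          ← Real.mul_rpow (inv_nonneg.2 hc.le) hc.le, inv_mul_cancel₀ hc.ne', Real.one_rpow,
          one_mul]
    _ ≤ c⁻¹ ^ p⁻¹ * |F t - F q| ^ p⁻¹ := by gcongr

theorem exists_Ioc_quarter_mul_le_mul {α β a b : ℝ} (ha : α ≤ a) (hb : b ≤ β) (hab : a ≤ b) :
    ∃ u, a ≤ u ∧ u + (b - a) / 4 ≤ b ∧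
      ∀ x ∈ Ioc u (u + (b - a) / 4), (β - α) / 2 * ((b - a) / 4) ≤ (β - x) * (x - α) := by
  rcases le_total (a + b) (α + β) with hmid | hmid
  · refine ⟨a + (b - a) / 4, by linarith, by linarith, fun x ⟨hx₁, hx₂⟩ ↦ ?_⟩
    exact mul_le_mul (by linarith) (by linarith) (by linarith) (by linarith)
  · refine ⟨a + (b - a) / 2, by linarith, by linarith, fun x ⟨hx₁, hx₂⟩ ↦ ?_⟩
    rw [mul_comm (β - x)]
    exact mul_le_mul (by linarith) (by linarith) (by linarith) (by linarith)

/-- `mpDensity (1 / (2πd)) λ₋ λ₊` is the Marchenko–Pastur density. -/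
noncomputable def mpDensity (K α β x : ℝ) : ℝ :=
  K * √(max 0 ((β - x) * (x - α))) / x

section mpDensity

variable {K α β : ℝ}

theorem mpDensity_eq_zero_of_notMem (hαβ : α ≤ β) {x : ℝ} (hx : x ∉ Icc α β) :
    mpDensity K α β x = 0 := by
  have hneg : (β - x) * (x - α) ≤ 0 := by
    simp only [mem_Icc, not_and_or, not_le] at hx
    rcases hx with hx | hx
    · exact mul_nonpos_of_nonneg_of_nonpos (by linarith) (by linarith)
    · exact mul_nonpos_of_nonpos_of_nonneg (by linarith) (by linarith)
  simp [mpDensity, max_eq_left hneg]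

theorem mpDensity_nonneg (hK : 0 ≤ K) (hα : 0 ≤ α) (hαβ : α ≤ β) (x : ℝ) :
    0 ≤ mpDensity K α β x := by
  by_cases hx : x ∈ Icc α β
  · exact div_nonneg (by positivity) (hα.trans hx.1)
  · exact (mpDensity_eq_zero_of_notMem hαβ hx).ge

theorem integrable_mpDensity (hα : 0 < α) (hαβ : α ≤ β) : Integrable (mpDensity K α β) := by
  have hcont : ContinuousOn (mpDensity K α β) (Icc α β) :=
    ContinuousOn.div (by fun_prop) continuousOn_id
      fun x hx ↦ (hα.trans_le hx.1).ne'
  have hsupp : (Icc α β).indicator (mpDensity K α β) = mpDensity K α β := by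
    refine indicator_eq_self.2 fun x hx ↦ by_contra fun hxs ↦ hx ?_
    exact mpDensity_eq_zero_of_notMem hαβ hxs
  rw [← hsupp]
  exact hcont.integrableOn_Icc.integrable_indicator measurableSet_Icc

theorem div_le_mpDensity (hK : 0 ≤ K) (hα : 0 < α) {x m : ℝ} (hx : x ∈ Icc α β)
    (hm : m ≤ (β - x) * (x - α)) : K * √m / β ≤ mpDensity K α β x := by
  have hx₀ : 0 < x := hα.trans_le hx.1
  have hβ : 0 < β := hx₀.trans_le hx.2
  calc K * √m / β ≤ K * √(max 0 ((β - x) * (x - α))) / β := by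
        gcongr
        exact hm.trans (le_max_right _ _)
    _ ≤ mpDensity K α β x := by
        unfold mpDensity
        exact div_le_div_of_nonneg_left (by positivity) hx₀ hx.2

theorem mul_rpow_le_setIntegral_mpDensity (hK : 0 ≤ K) (hα : 0 < α) {a b : ℝ} (ha : α ≤ a)
    (hb : b ≤ β) (hab : a ≤ b) :
    K * √((β - α) / 8) / (4 * β) * (b - a) ^ (3 / 2 : ℝ) ≤
      ∫ x in Ioc a b, mpDensity K α β x := by
  set L := b - a with hL
  have hL₀ : 0 ≤ L := sub_nonneg.2 hab
  have hαβ : α ≤ β := by linarith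
  obtain ⟨u, hau, hub, hbound⟩ := exists_Ioc_quarter_mul_le_mul ha hb hab
  have hρ := integrable_mpDensity (K := K) hα hαβ
  have hpiece : K * √((β - α) / 2 * (L / 4)) / β * (L / 4) ≤
      ∫ x in Ioc u (u + L / 4), mpDensity K α β x := by
    have h := setIntegral_ge_of_const_le_real (μ := volume) measurableSet_Ioc
      (by simp [Real.volume_Ioc]) (fun x hx ↦ div_le_mpDensity hK hα
        ⟨by linarith [hx.1], by linarith [hx.2]⟩ (hbound x hx)) hρ.integrableOn
    rwa [Real.volume_real_Ioc_of_le (by linarith), add_sub_cancel_left] at h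
  have hmono : ∫ x in Ioc u (u + L / 4), mpDensity K α β x ≤ ∫ x in Ioc a b, mpDensity K α β x :=
    setIntegral_mono_set hρ.integrableOn (ae_of_all _ (mpDensity_nonneg hK hα.le hαβ))
      (Ioc_subset_Ioc hau hub).eventuallyLE
  refine le_trans (le_of_eq ?_) (hpiece.trans hmono)
  rw [show (3 / 2 : ℝ) = 1 / 2 + 1 by norm_num, Real.rpow_add' hL₀ (by norm_num), Real.rpow_one,
    ← Real.sqrt_eq_rpow, show (β - α) / 2 * (L / 4) = (β - α) / 8 * L by ring,
    Real.sqrt_mul' _ hL₀]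
  ring

end mpDensity

/-- Hölder-`2/3` regularity of the inverse of the Marchenko–Pastur distribution
function: `|t − n_W⁻¹(s)| ≤ C·|n_W(t) − s|^{2/3}` for `t` in the bulk, where the
inverse point `q ∈ [λ₋, λ₊]` is characterized by `n_W(q) = s`. -/
theorem stmt_8 (d : ℝ) (hd0 : 0 < d) (hd1 : d < 1) :
    let lm : ℝ := (1 - Real.sqrt d) ^ 2
    let lp : ℝ := (1 + Real.sqrt d) ^ 2
    let ρ : ℝ → ℝ := fun x => (1 / (2 * Real.pi * d)) *
      Real.sqrt (max 0 ((lp - x) * (x - lm))) / x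
    let nW : ℝ → ℝ := fun E => ∫ x in Set.Iic E, ρ x
    ∃ C : ℝ, 0 < C ∧ ∀ t ∈ Set.Ioo lm lp, ∀ s ∈ Set.Icc (0 : ℝ) 1,
      ∀ q ∈ Set.Icc lm lp, nW q = s →
        |t - q| ≤ C * |nW t - s| ^ ((2 : ℝ) / 3) := by
  intro lm lp ρ nW
  have hsd : 0 < √d ∧ √d < 1 :=
    ⟨Real.sqrt_pos.2 hd0, (Real.sqrt_lt' one_pos).2 (by simpa using hd1)⟩
  have hlm : 0 < lm := pow_pos (by linarith) 2
  have hlmlp : lm < lp := by simp only [lm, lp]; nlinarith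
  have hK : 0 ≤ 1 / (2 * Real.pi * d) := by positivity
  set c := 1 / (2 * Real.pi * d) * √((lp - lm) / 8) / (4 * lp)
  have hc : 0 < c := by
    have : 0 < √((lp - lm) / 8) := Real.sqrt_pos.2 (by linarith)
    have : 0 < Real.pi := Real.pi_pos
    positivity
  have hgrowth : ∀ a ∈ Icc lm lp, ∀ b ∈ Icc lm lp, a ≤ b →
      c * (b - a) ^ (3 / 2 : ℝ) ≤ nW b - nW a := by
    intro a ha b hb hab
    have hρ : Integrable ρ := integrable_mpDensity hlm hlmlp.le
    rw [show nW b - nW a = ∫ x in Ioc a b, ρ x by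
      rw [intervalIntegral.integral_Iic_sub_Iic hρ.integrableOn hρ.integrableOn,
        intervalIntegral.integral_of_le hab]]
    exact mul_rpow_le_setIntegral_mpDensity hK hlm ha.1 hb.2 hab
  refine ⟨c⁻¹ ^ (2 / 3 : ℝ), by positivity, ?_⟩
  rintro t ht s - q hq rfl
  have h := abs_sub_le_of_rpow_le_sub hc (by norm_num) hgrowth (Ioo_subset_Icc_self ht) hq
  rwa [show (3 / 2 : ℝ)⁻¹ = 2 / 3 by norm_num] at h
end

section
/- Let f : ℝ → [0,1] be nondecreasing and g : ℝ → [0,1] be L-Lipschitz nondecreasing. Suppose at some point E, f(E) − g(E) = Δ > 0. Then ∫_E^{E+Δ/(2L)} |f(E') − g(E')| dE' ≥ Δ²/(8L). -/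
open MeasureTheory Set
open scoped NNReal

/- On `[E, E + Δ/(2L)]` the monotone `f` cannot drop below `f E`, while the `L`-Lipschitz `g`
rises by at most `Δ/2`, so `|f - g| ≥ Δ/2` there and the integral is at least
`Δ/2 · Δ/(2L) = Δ²/(4L)`. -/

theorem Monotone.sub_sub_mul_le_sub {f g : ℝ → ℝ} {K : ℝ≥0} (hf : Monotone f)
    (hg : LipschitzWith K g) {a x : ℝ} (hax : a ≤ x) :
    f a - g a - K * (x - a) ≤ f x - g x := by
  have hgx : g x - g a ≤ K * (x - a) := by
    simpa [Real.dist_eq, abs_of_nonneg (sub_nonneg.2 hax)] using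
      (le_abs_self _).trans (hg.dist_le_mul x a)
  linarith [hf hax]

theorem Monotone.sq_div_four_le_integral_abs_sub {f g : ℝ → ℝ} {K : ℝ≥0} (hf : Monotone f)
    (hg : LipschitzWith K g) (hK : 0 < K) {a : ℝ} (hgap : 0 ≤ f a - g a) :
    (f a - g a) ^ 2 / (4 * K) ≤
      ∫ x in Icc a (a + (f a - g a) / (2 * K)), |f x - g x| := by
  set Δ := f a - g a
  have hK' : (0 : ℝ) < K := hK
  have hlen : a ≤ a + Δ / (2 * K) := le_add_of_nonneg_right (by positivity)
  have hlow : ∀ x ∈ Icc a (a + Δ / (2 * K)), Δ / 2 ≤ |f x - g x| := fun x hx =>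
    calc Δ / 2 = Δ - K * (Δ / (2 * K)) := by field_simp; ring
      _ ≤ Δ - K * (x - a) := by gcongr; linarith [hx.2]
      _ ≤ f x - g x := hf.sub_sub_mul_le_sub hg hx.1
      _ ≤ |f x - g x| := le_abs_self _
  have hint : IntegrableOn (fun x => |f x - g x|) (Icc a (a + Δ / (2 * K))) :=
    ((hf.locallyIntegrable.sub hg.continuous.locallyIntegrable).integrableOn_isCompact
      isCompact_Icc).abs
  calc Δ ^ 2 / (4 * K) = Δ / 2 * volume.real (Icc a (a + Δ / (2 * K))) := by
        rw [Real.volume_real_Icc_of_le hlen]; field_simp; ring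
    _ ≤ _ := setIntegral_ge_of_const_le_real measurableSet_Icc measure_Icc_lt_top.ne hlow hint

theorem stmt_16_general (L Δ E : ℝ) (hL : 0 < L) (hΔ : 0 < Δ)
    (f g : ℝ → ℝ) (hf : Monotone f)
    (hglip : LipschitzWith (Real.toNNReal L) g)
    (hgap : f E - g E = Δ) :
    Δ ^ 2 / (8 * L) ≤ ∫ x in Set.Icc E (E + Δ / (2 * L)), |f x - g x| := by
  have key := hf.sq_div_four_le_integral_abs_sub hglip (Real.toNNReal_pos.2 hL) (hgap ▸ hΔ.le)
  rw [hgap, Real.coe_toNNReal L hL.le] at key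
  refine le_trans ?_ key
  gcongr
  norm_num

/-- A pointwise gap `f(E) − g(E) = Δ > 0` between a nondecreasing function `f` and an
`L`-Lipschitz nondecreasing function `g` (both `[0,1]`-valued) forces an `L¹` lower
bound: `∫_E^{E+Δ/(2L)} |f − g| ≥ Δ²/(8L)`. -/
theorem stmt_16 (L Δ E : ℝ) (hL : 0 < L) (hΔ : 0 < Δ)
    (f g : ℝ → ℝ) (hf : Monotone f) (hfr : ∀ x, f x ∈ Set.Icc (0 : ℝ) 1)
    (hg : Monotone g) (hglip : LipschitzWith (Real.toNNReal L) g)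
    (hgr : ∀ x, g x ∈ Set.Icc (0 : ℝ) 1)
    (hgap : f E - g E = Δ) :
    Δ ^ 2 / (8 * L) ≤ ∫ x in Set.Icc E (E + Δ / (2 * L)), |f x - g x| :=
  stmt_16_general L Δ E hL hΔ f g hf hglip hgap
end

section
/- Let x* = (x₁*, …, x_N*) and γ = (γ₁, …, γ_N) be nondecreasing sequences of reals with |γ_i − γ_j| ≤ C·N^{−2/3}·|i−j| for all i, j. Suppose |x*_{j₀} − γ_{j₀}| ≥ N^{−1/10} for some j₀ with N^{1/2} ≤ j₀ ≤ N − N^{1/2}. Then ∑_{j=1}^N (x*_j − γ_j)² ≥ c·N^{3/10} for some constant c > 0 depending only on C, provided N is sufficiently large. -/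
/-!
Monotonicity of `x` and the Lipschitz bound on `γ` let a deviation `δ` of `x - γ` at `j₀`
propagate: going right from `j₀` (if `x j₀ - γ j₀ ≥ δ`) or left (if `γ j₀ - x j₀ ≥ δ`), the
deviation stays at least `δ / 2` over a window of `K` consecutive indices as long as
`L * K ≤ δ / 2`, so the sum of squares is at least `K * (δ / 2) ^ 2`. With `δ = N^{-1/10}`,
`L = C N^{-2/3}` and `K = ⌊√N⌋` the window condition holds once `N ≥ (2C)^15`, and
`K * (δ / 2) ^ 2 ≥ N^{3/10} / 8`.
-/

open Finset

section Window

variable {N : ℕ} {x γ : Fin N → ℝ} {L : ℝ}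

lemma sub_sub_mul_le_sub_of_monotone (hx : Monotone x)
    (hγ : ∀ i j : Fin N, |γ i - γ j| ≤ L * |(i : ℝ) - (j : ℝ)|) {i j : Fin N} (hij : i ≤ j) :
    x i - γ i - L * ((j : ℝ) - i) ≤ x j - γ j := by
  have hij' : (i : ℝ) ≤ j := by exact_mod_cast hij
  have hγij : γ j - γ i ≤ L * ((j : ℝ) - i) := by
    simpa only [abs_of_nonneg (sub_nonneg.2 hij')] using (le_abs_self _).trans (hγ j i)
  linarith [hx hij]

lemma card_mul_sq_le_sum_sq_of_le_sub (hx : Monotone x)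
    (hγ : ∀ i j : Fin N, |γ i - γ j| ≤ L * |(i : ℝ) - (j : ℝ)|) (hL : 0 ≤ L)
    {j₀ : Fin N} {K : ℕ} {δ : ℝ} (hK : (j₀ : ℕ) + K ≤ N) (hLK : L * K ≤ δ / 2) (hδ : 0 ≤ δ)
    (hdev : δ ≤ x j₀ - γ j₀) :
    K * (δ / 2) ^ 2 ≤ ∑ j, (x j - γ j) ^ 2 := by
  set e : Fin K ↪ Fin N := (Fin.natAddEmb j₀).trans (Fin.castLEEmb hK)
  have he : ∀ m, (e m : ℕ) = j₀ + m := fun m => by simp [e]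
  have hwindow : ∀ j ∈ univ.map e, (δ / 2) ^ 2 ≤ (x j - γ j) ^ 2 := by
    simp only [mem_map, mem_univ, true_and]
    rintro _ ⟨m, rfl⟩
    have hdecay := sub_sub_mul_le_sub_of_monotone hx hγ (i := j₀) (j := e m)
      (by rw [Fin.le_def, he]; omega)
    have hm : L * m ≤ L * K := mul_le_mul_of_nonneg_left (by exact_mod_cast m.isLt.le) hL
    rw [he, Nat.cast_add, add_sub_cancel_left] at hdecay
    exact pow_le_pow_left₀ (by positivity) (by linarith) 2
  calc (K : ℝ) * (δ / 2) ^ 2 = #(univ.map e) • (δ / 2) ^ 2 := by simp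
    _ ≤ ∑ j ∈ univ.map e, (x j - γ j) ^ 2 := card_nsmul_le_sum _ _ _ hwindow
    _ ≤ ∑ j, (x j - γ j) ^ 2 := sum_le_univ_sum_of_nonneg fun _ => sq_nonneg _

lemma card_mul_sq_le_sum_sq_of_le_sub' (hx : Monotone x)
    (hγ : ∀ i j : Fin N, |γ i - γ j| ≤ L * |(i : ℝ) - (j : ℝ)|) (hL : 0 ≤ L)
    {j₀ : Fin N} {K : ℕ} {δ : ℝ} (hK : K ≤ (j₀ : ℕ) + 1) (hLK : L * K ≤ δ / 2) (hδ : 0 ≤ δ)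
    (hdev : δ ≤ γ j₀ - x j₀) :
    K * (δ / 2) ^ 2 ≤ ∑ j, (x j - γ j) ^ 2 := by
  have hrev : ∀ k : Fin N, (k.rev : ℝ) = N - 1 - k := fun k => by
    rw [Fin.val_rev, Nat.cast_sub (by omega)]
    push_cast
    ring
  have hx' : Monotone fun j : Fin N => -x j.rev := fun i j hij => neg_le_neg (hx (Fin.rev_anti hij))
  have hγ' : ∀ i j : Fin N, |-γ i.rev - -γ j.rev| ≤ L * |(i : ℝ) - (j : ℝ)| := fun i j => by
    have h := hγ j.rev i.rev
    rw [hrev, hrev] at h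
    rw [neg_sub_neg]
    rwa [show (N : ℝ) - 1 - j - (N - 1 - i) = i - j by ring] at h
  have h := card_mul_sq_le_sum_sq_of_le_sub hx' hγ' hL (j₀ := j₀.rev)
    (by rw [Fin.val_rev]; omega) hLK hδ (by simp only [Fin.rev_rev]; linarith)
  calc (K : ℝ) * (δ / 2) ^ 2 ≤ ∑ j : Fin N, (-x j.rev - -γ j.rev) ^ 2 := h
    _ = ∑ j, (x j - γ j) ^ 2 := by
      simp only [neg_sub_neg, ← neg_sub (x _), neg_sq]
      exact Equiv.sum_comp Fin.revPerm fun j => (x j - γ j) ^ 2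

lemma card_mul_sq_le_sum_sq_of_le_abs (hx : Monotone x)
    (hγ : ∀ i j : Fin N, |γ i - γ j| ≤ L * |(i : ℝ) - (j : ℝ)|) (hL : 0 ≤ L)
    {j₀ : Fin N} {K : ℕ} {δ : ℝ} (hKright : (j₀ : ℕ) + K ≤ N) (hKleft : K ≤ (j₀ : ℕ) + 1)
    (hLK : L * K ≤ δ / 2) (hδ : 0 ≤ δ) (hdev : δ ≤ |x j₀ - γ j₀|) :
    K * (δ / 2) ^ 2 ≤ ∑ j, (x j - γ j) ^ 2 := by
  rcases le_abs'.1 hdev with hdown | hup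
  · exact card_mul_sq_le_sum_sq_of_le_sub' hx hγ hL hKleft hLK hδ (by linarith)
  · exact card_mul_sq_le_sum_sq_of_le_sub hx hγ hL hKright hLK hδ hup

end Window

section Exponents

open Real

lemma mul_rpow_mul_sqrt_le {C R : ℝ} (hC : 0 ≤ C) (hR : 0 < R) (hCR : (2 * C) ^ 15 ≤ R) :
    C * R ^ (-(2 : ℝ) / 3) * √R ≤ R ^ (-(1 : ℝ) / 10) / 2 := by
  have h2C : 2 * C ≤ R ^ ((1 : ℝ) / 15) := by
    calc 2 * C = ((2 * C) ^ (15 : ℝ)) ^ ((1 : ℝ) / 15) := by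
          rw [← rpow_mul (by positivity)]; norm_num
      _ ≤ R ^ ((1 : ℝ) / 15) := rpow_le_rpow (by positivity) (by exact_mod_cast hCR) (by norm_num)
  calc C * R ^ (-(2 : ℝ) / 3) * √R = C * R ^ (-(1 : ℝ) / 6) := by
        rw [sqrt_eq_rpow, mul_assoc, ← rpow_add hR]; norm_num
    _ ≤ R ^ ((1 : ℝ) / 15) / 2 * R ^ (-(1 : ℝ) / 6) := by gcongr; linarith
    _ = R ^ (-(1 : ℝ) / 10) / 2 := by
        rw [div_mul_eq_mul_div, ← rpow_add hR]; norm_num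

lemma rpow_div_le_floor_sqrt_mul {R : ℝ} (hR : 4 ≤ R) :
    1 / 8 * R ^ ((3 : ℝ) / 10) ≤ ⌊√R⌋₊ * (R ^ (-(1 : ℝ) / 10) / 2) ^ 2 := by
  have hR0 : 0 < R := by linarith
  have hsqrt : 2 ≤ √R := by
    rw [show (2 : ℝ) = √4 by rw [show (4 : ℝ) = 2 ^ 2 by norm_num, sqrt_sq zero_le_two]]
    exact sqrt_le_sqrt hR
  have hK : √R / 2 ≤ ⌊√R⌋₊ := by linarith [Nat.lt_floor_add_one √R]
  have hexp : R ^ ((3 : ℝ) / 10) = √R * (R ^ (-(1 : ℝ) / 10)) ^ 2 := by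
    rw [sqrt_eq_rpow, ← rpow_natCast, ← rpow_mul hR0.le, ← rpow_add hR0]; norm_num
  calc 1 / 8 * R ^ ((3 : ℝ) / 10) = √R / 2 * (R ^ (-(1 : ℝ) / 10) / 2) ^ 2 := by
        rw [hexp]; ring
    _ ≤ ⌊√R⌋₊ * (R ^ (-(1 : ℝ) / 10) / 2) ^ 2 := by gcongr

end Exponents

/-- If the ordered points `x*` deviate from the classical locations `γ` by at least
`N^{-1/10}` at some bulk index `j₀` (with the `γ` satisfying a Lipschitz-type bound
`|γ_i − γ_j| ≤ C·N^{−2/3}·|i−j|`), then `∑ (x*_j − γ_j)² ≥ c·N^{3/10}` for large `N`. -/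
theorem stmt_17 (C : ℝ) (hC : 0 < C) :
    ∃ c : ℝ, 0 < c ∧ ∃ N₀ : ℕ, ∀ N : ℕ, N₀ ≤ N →
      ∀ x γ : Fin N → ℝ, Monotone x → Monotone γ →
      (∀ i j : Fin N, |γ i - γ j| ≤ C * (N : ℝ) ^ (-(2 : ℝ) / 3) * |(i : ℝ) - (j : ℝ)|) →
      ∀ j₀ : Fin N,
        Real.sqrt N ≤ (j₀ : ℝ) + 1 → (j₀ : ℝ) + 1 ≤ (N : ℝ) - Real.sqrt N →
        (N : ℝ) ^ (-(1 : ℝ) / 10) ≤ |x j₀ - γ j₀| →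
        c * (N : ℝ) ^ ((3 : ℝ) / 10) ≤ ∑ j, (x j - γ j) ^ 2 := by
  refine ⟨1 / 8, by norm_num, ⌈(2 * C) ^ 15⌉₊ + 4, ?_⟩
  intro N hN x γ hx _ hlip j₀ hlo hhi hdev
  have hN4 : (4 : ℝ) ≤ N := by exact_mod_cast (by omega : 4 ≤ N)
  have hNC : (2 * C) ^ 15 ≤ N :=
    (Nat.le_ceil _).trans (by exact_mod_cast (by omega : ⌈(2 * C) ^ 15⌉₊ ≤ N))
  set K := ⌊Real.sqrt N⌋₊
  have hK : (K : ℝ) ≤ Real.sqrt N := Nat.floor_le (Real.sqrt_nonneg _)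
  have hKright : (j₀ : ℕ) + K ≤ N := by exact_mod_cast (by linarith : ((j₀ : ℕ) + K : ℝ) ≤ N)
  have hKleft : K ≤ (j₀ : ℕ) + 1 := by exact_mod_cast hK.trans hlo
  have hLK : C * (N : ℝ) ^ (-(2 : ℝ) / 3) * K ≤ (N : ℝ) ^ (-(1 : ℝ) / 10) / 2 :=
    (mul_le_mul_of_nonneg_left hK (by positivity)).trans
      (mul_rpow_mul_sqrt_le hC.le (by linarith) hNC)
  exact (rpow_div_le_floor_sqrt_mul hN4).trans
    (card_mul_sq_le_sum_sq_of_le_abs hx hlip (by positivity) hKright hKleft hLK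
      (by positivity) hdev)
end

section
/- Let λ_j ≥ 0 be real numbers and z = E + iη with E ≥ λ₋/2 > 0 and 0 < η ≤ E/2. Then (1/M²)·∑_α λ_α²/|λ_α − z|² ≤ (C·K)/(M·η) provided that for every dyadic interval I around E of length 2^k·η (k ≥ 0) the number of λ_α in I is at most K·M·2^k·η, and the λ_α are bounded by an absolute constant. -/
/-!
Bound `λ_α² ≤ Λ₀²` and split the `λ_α` into the ball `|λ_α - E| ≤ η` and the dyadic shells
`2^k η < |λ_α - E| ≤ 2^(k+1) η`. The shell holds at most `K M 2^(k+1) η` points, each contributing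
at most `(4^k η²)⁻¹`, so the shells contribute a geometric series `∑ 2 K M / (2^k η)`, and in
total `∑ ((λ_α - E)² + η²)⁻¹ ≤ 5 K M / η`.
-/

open Finset

section DyadicShells

variable {ι : Type*} (s : Finset ι) (d : ι → ℝ) {η A : ℝ}

lemma sum_le_of_forall_le_of_card_le {t : Finset ι} {f : ι → ℝ} {b c : ℝ}
    (hf : ∀ α ∈ t, f α ≤ b) (hb : 0 ≤ b) (ht : (#t : ℝ) ≤ c) :
    ∑ α ∈ t, f α ≤ c * b :=
  calc ∑ α ∈ t, f α ≤ #t * b := by simpa using sum_le_card_nsmul t f b hf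
    _ ≤ c * b := mul_le_mul_of_nonneg_right ht hb

lemma inv_sq_add_sq_le_inv_sq {x r : ℝ} (η : ℝ) (hr : 0 < r) (hrx : r ≤ |x|) :
    (x ^ 2 + η ^ 2)⁻¹ ≤ (r ^ 2)⁻¹ := by
  gcongr
  nlinarith [sq_abs x, sq_nonneg η]

variable (hη : 0 < η)
  (hcount : ∀ k : ℕ, (#(s.filter fun α => |d α| ≤ 2 ^ k * η) : ℝ) ≤ A * 2 ^ k * η)
include hη hcount

lemma sum_inv_sq_add_sq_filter_le (N : ℕ) :
    ∑ α ∈ s.filter (fun α => |d α| ≤ 2 ^ N * η), (d α ^ 2 + η ^ 2)⁻¹ ≤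
      A / η * (5 - 4 * (2⁻¹ : ℝ) ^ N) := by
  induction N with
  | zero =>
    have hball : ∀ α ∈ s.filter (fun α => |d α| ≤ 2 ^ 0 * η), (d α ^ 2 + η ^ 2)⁻¹ ≤ (η ^ 2)⁻¹ :=
      fun α _ => by gcongr; nlinarith [sq_nonneg (d α)]
    calc _ ≤ A * 2 ^ 0 * η * (η ^ 2)⁻¹ :=
          sum_le_of_forall_le_of_card_le hball (by positivity) (hcount 0)
      _ = _ := by field_simp; ring
  | succ N ih =>
    classical
    set ball := s.filter (fun α => |d α| ≤ 2 ^ N * η)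
    set ballSucc := s.filter (fun α => |d α| ≤ 2 ^ (N + 1) * η)
    have hsub : ball ⊆ ballSucc := monotone_filter_right s fun α _ (h : |d α| ≤ 2 ^ N * η) =>
      h.trans (by gcongr <;> norm_num)
    have hshell : ∀ α ∈ ballSucc \ ball, (d α ^ 2 + η ^ 2)⁻¹ ≤ ((2 ^ N * η) ^ 2)⁻¹ := by
      intro α hα
      simp only [ball, ballSucc, mem_sdiff, mem_filter, not_and, not_le] at hα
      exact inv_sq_add_sq_le_inv_sq η (by positivity) (hα.2 hα.1.1).le
    have hshell_sum : ∑ α ∈ ballSucc \ ball, (d α ^ 2 + η ^ 2)⁻¹ ≤ A / η * (2 * (2⁻¹ : ℝ) ^ N) :=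
      calc _ ≤ A * 2 ^ (N + 1) * η * ((2 ^ N * η) ^ 2)⁻¹ :=
            sum_le_of_forall_le_of_card_le hshell (by positivity)
              ((Nat.cast_le.mpr (card_le_card sdiff_subset)).trans (hcount (N + 1)))
        _ = _ := by rw [inv_pow]; field_simp; ring
    rw [← sum_sdiff hsub]
    linarith [show A / η * (2 * (2⁻¹ : ℝ) ^ N) + A / η * (5 - 4 * (2⁻¹ : ℝ) ^ N) =
      A / η * (5 - 4 * (2⁻¹ : ℝ) ^ (N + 1)) by ring]

lemma sum_inv_sq_add_sq_le : ∑ α ∈ s, (d α ^ 2 + η ^ 2)⁻¹ ≤ 5 * A / η := by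
  have hA : 0 ≤ A := by
    have := hcount 0
    rw [pow_zero, mul_one] at this
    exact nonneg_of_mul_nonneg_left ((Nat.cast_nonneg _).trans this) hη
  obtain ⟨N, hN⟩ := pow_unbounded_of_one_lt ((∑ α ∈ s, |d α|) / η) one_lt_two
  have hcover : s.filter (fun α => |d α| ≤ 2 ^ N * η) = s := by
    refine filter_true_of_mem fun α hα => ?_
    rw [div_lt_iff₀ hη] at hN
    exact (single_le_sum (fun β _ => abs_nonneg (d β)) hα).trans hN.le
  calc _ ≤ A / η * (5 - 4 * (2⁻¹ : ℝ) ^ N) := hcover ▸ sum_inv_sq_add_sq_filter_le s d hη hcount N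
    _ ≤ A / η * 5 := mul_le_mul_of_nonneg_left (sub_le_self _ (by positivity)) (by positivity)
    _ = 5 * A / η := by ring

end DyadicShells

/-- Dyadic-decomposition bound: if the `λ_α ∈ [0, Λ₀]` have local density at most
`K·M` on every dyadic scale `2^k·η` around `E`, then
`(1/M²)·∑ λ_α²/((λ_α−E)²+η²) ≤ C·K/(M·η)` with `C` depending only on `Λ₀`. -/
theorem stmt_19 (Λ₀ : ℝ) (hΛ₀ : 0 < Λ₀) :
    ∃ C : ℝ, 0 < C ∧ ∀ (M n : ℕ) (lam : Fin n → ℝ) (lamMinus E η K : ℝ),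
      1 ≤ M →
      (∀ α, 0 ≤ lam α ∧ lam α ≤ Λ₀) →
      0 < lamMinus → lamMinus / 2 ≤ E → 0 < η → η ≤ E / 2 → 1 ≤ K →
      (∀ k : ℕ, ((univ.filter fun α => |lam α - E| ≤ 2 ^ k * η).card : ℝ) ≤
        K * M * 2 ^ k * η) →
      (1 / (M : ℝ) ^ 2) * ∑ α, lam α ^ 2 / ((lam α - E) ^ 2 + η ^ 2) ≤
        C * K / (M * η) := by
  refine ⟨5 * Λ₀ ^ 2, by positivity, ?_⟩
  intro M n lam lamMinus E η K hM hlam _ _ hη _ _ hcount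
  have hM0 : (M : ℝ) ≠ 0 := by positivity
  have hterm (α : Fin n) : lam α ^ 2 / ((lam α - E) ^ 2 + η ^ 2) ≤
      Λ₀ ^ 2 * ((lam α - E) ^ 2 + η ^ 2)⁻¹ := by
    rw [div_eq_mul_inv]
    gcongr
    exacts [(hlam α).1, (hlam α).2]
  have hsum := sum_inv_sq_add_sq_le univ (fun α => lam α - E) hη hcount
  calc (1 / (M : ℝ) ^ 2) * ∑ α, lam α ^ 2 / ((lam α - E) ^ 2 + η ^ 2)
      ≤ (1 / (M : ℝ) ^ 2) * (Λ₀ ^ 2 * (5 * (K * M) / η)) := by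
        gcongr
        calc ∑ α, lam α ^ 2 / ((lam α - E) ^ 2 + η ^ 2)
            ≤ ∑ α, Λ₀ ^ 2 * ((lam α - E) ^ 2 + η ^ 2)⁻¹ := sum_le_sum fun α _ => hterm α
          _ ≤ Λ₀ ^ 2 * (5 * (K * M) / η) := by
            rw [← mul_sum]
            exact mul_le_mul_of_nonneg_left hsum (sq_nonneg Λ₀)
    _ = 5 * Λ₀ ^ 2 * K / (M * η) := by field_simp
end
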